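/- arXiv:0806.0459 — 2 statements merged into one kernel-verified Lean document; each statement's English description precedes it below -/
import Mathlib

section
/- For all reals λ₁, λ₂ ≠ 0, u > 0, d ≥ 1 a positive integer, and C > 1, the integral ∫_{Cu}^∞ ( |λ₁λ₂| · min(u/|λ₁|, v/|λ₂|)² / (uv) )^{2d} dv/v is bounded by a constant depending only on d and C, uniformly in λ₁, λ₂, u. -/
/-!
With `t = u |λ₂| / |λ₁|` the integrand becomes `r(v)^(2d) / v`, where
`r(v) = min(t,v)² / (t v) = min(t,v) / max(t,v) ≤ 1`. Since `d ≥ 1` this is at most `r(v)² / v`,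
and `r(v) ≤ 2 t v / (t² + v²)`. The resulting majorant `4 t² v / (t² + v²)²` is the derivative of
`-2 t² / (t² + v²)`, so its integral over `(0, ∞)` is `2`, whatever `t` is.
-/

open MeasureTheory Filter Topology Set

namespace MinRatio

variable {t v : ℝ}

lemma min_sq_div_mul_nonneg (ht : 0 < t) (hv : 0 < v) : 0 ≤ min t v ^ 2 / (t * v) := by
  positivity

lemma min_sq_div_mul_le_one (ht : 0 < t) (hv : 0 < v) : min t v ^ 2 / (t * v) ≤ 1 := by
  rw [div_le_one (by positivity), sq]
  exact mul_le_mul (min_le_left t v) (min_le_right t v) (le_min ht.le hv.le) ht.le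

lemma min_sq_div_mul_le (ht : 0 < t) (hv : 0 < v) :
    min t v ^ 2 / (t * v) ≤ 2 * t * v / (t ^ 2 + v ^ 2) := by
  rw [div_le_div_iff₀ (by positivity) (by positivity)]
  rcases le_total t v with h | h
  · rw [min_eq_left h]
    nlinarith [mul_le_mul h h ht.le hv.le, pow_pos ht 2]
  · rw [min_eq_right h]
    nlinarith [mul_le_mul h h hv.le ht.le, pow_pos hv 2]

lemma pow_min_sq_div_mul_div_le {d : ℕ} (hd : 1 ≤ d) (ht : 0 < t) (hv : 0 < v) :
    (min t v ^ 2 / (t * v)) ^ (2 * d) / v ≤ 4 * t ^ 2 * v / (t ^ 2 + v ^ 2) ^ 2 := by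
  have hsq : (min t v ^ 2 / (t * v)) ^ (2 * d) ≤ (2 * t * v / (t ^ 2 + v ^ 2)) ^ 2 :=
    calc (min t v ^ 2 / (t * v)) ^ (2 * d)
        ≤ (min t v ^ 2 / (t * v)) ^ 2 :=
          pow_le_pow_of_le_one (min_sq_div_mul_nonneg ht hv) (min_sq_div_mul_le_one ht hv)
            (by omega)
      _ ≤ (2 * t * v / (t ^ 2 + v ^ 2)) ^ 2 :=
          pow_le_pow_left₀ (min_sq_div_mul_nonneg ht hv) (min_sq_div_mul_le ht hv) 2
  calc (min t v ^ 2 / (t * v)) ^ (2 * d) / v ≤ (2 * t * v / (t ^ 2 + v ^ 2)) ^ 2 / v :=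
        div_le_div_of_nonneg_right hsq hv.le
    _ = 4 * t ^ 2 * v / (t ^ 2 + v ^ 2) ^ 2 := by field_simp; ring

end MinRatio

section InverseSquareKernel

variable {t : ℝ}

lemma hasDerivAt_neg_two_sq_div_sq_add_sq (ht : 0 < t) (x : ℝ) :
    HasDerivAt (fun v : ℝ => -(2 * t ^ 2) / (t ^ 2 + v ^ 2))
      (4 * t ^ 2 * x / (t ^ 2 + x ^ 2) ^ 2) x := by
  have hx : t ^ 2 + x ^ 2 ≠ 0 := by positivity
  have hden : HasDerivAt (fun v : ℝ => t ^ 2 + v ^ 2) (2 * x) x := by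
    simpa using (hasDerivAt_pow 2 x).const_add (t ^ 2)
  refine ((hasDerivAt_const x (-(2 * t ^ 2))).div hden hx).congr_deriv ?_
  field_simp
  ring

lemma tendsto_neg_two_sq_div_sq_add_sq_atTop (t : ℝ) :
    Tendsto (fun v : ℝ => -(2 * t ^ 2) / (t ^ 2 + v ^ 2)) atTop (𝓝 0) := by
  have hden : Tendsto (fun v : ℝ => t ^ 2 + v ^ 2) atTop atTop :=
    tendsto_atTop_add_const_left _ _ (tendsto_pow_atTop two_ne_zero)
  simpa [div_eq_mul_inv] using hden.inv_tendsto_atTop.const_mul (-(2 * t ^ 2))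

lemma integral_Ioi_mul_div_sq_add_sq_sq {a : ℝ} (ht : 0 < t) (ha : 0 ≤ a) :
    IntegrableOn (fun v => 4 * t ^ 2 * v / (t ^ 2 + v ^ 2) ^ 2) (Ioi a) ∧
      ∫ v in Ioi a, 4 * t ^ 2 * v / (t ^ 2 + v ^ 2) ^ 2 = 2 * t ^ 2 / (t ^ 2 + a ^ 2) := by
  have hderiv x (_ : x ∈ Ici a) := hasDerivAt_neg_two_sq_div_sq_add_sq ht x
  have hnonneg : ∀ x ∈ Ioi a, 0 ≤ 4 * t ^ 2 * x / (t ^ 2 + x ^ 2) ^ 2 := fun x hx => by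
    have : 0 < x := ha.trans_lt hx
    positivity
  refine ⟨integrableOn_Ioi_deriv_of_nonneg' hderiv hnonneg
      (tendsto_neg_two_sq_div_sq_add_sq_atTop t), ?_⟩
  rw [integral_Ioi_of_hasDerivAt_of_nonneg' hderiv hnonneg
    (tendsto_neg_two_sq_div_sq_add_sq_atTop t)]
  ring

end InverseSquareKernel

lemma integral_Ioi_pow_min_sq_div_mul_div_le {d : ℕ} (hd : 1 ≤ d) {t a : ℝ} (ht : 0 < t)
    (ha : 0 ≤ a) : ∫ v in Ioi a, (min t v ^ 2 / (t * v)) ^ (2 * d) / v ≤ 2 := by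
  obtain ⟨hint, hval⟩ := integral_Ioi_mul_div_sq_add_sq_sq ht ha
  calc ∫ v in Ioi a, (min t v ^ 2 / (t * v)) ^ (2 * d) / v
      ≤ ∫ v in Ioi a, 4 * t ^ 2 * v / (t ^ 2 + v ^ 2) ^ 2 := by
        refine integral_mono_of_nonneg ?_ hint ?_ <;>
          filter_upwards [ae_restrict_mem measurableSet_Ioi] with v hv
        · have hv : 0 < v := ha.trans_lt hv
          have := MinRatio.min_sq_div_mul_nonneg ht hv
          positivity
        · exact MinRatio.pow_min_sq_div_mul_div_le hd ht (ha.trans_lt hv)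
    _ = 2 * t ^ 2 / (t ^ 2 + a ^ 2) := hval
    _ ≤ 2 := by
        rw [div_le_iff₀ (by positivity)]
        nlinarith [sq_nonneg a]

lemma abs_mul_mul_min_sq_div_eq {lam₁ lam₂ u v : ℝ} (h₁ : lam₁ ≠ 0) (h₂ : lam₂ ≠ 0)
    (hu : 0 < u) (hv : 0 < v) :
    |lam₁ * lam₂| * min (u / |lam₁|) (v / |lam₂|) ^ 2 / (u * v) =
      min (u * |lam₂| / |lam₁|) v ^ 2 / (u * |lam₂| / |lam₁| * v) := by
  have h₁' : 0 < |lam₁| := abs_pos.mpr h₁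
  have h₂' : 0 < |lam₂| := abs_pos.mpr h₂
  have hmin : min (u / |lam₁|) (v / |lam₂|) = min (u * |lam₂| / |lam₁|) v / |lam₂| := by
    rw [← min_div_div_right h₂'.le, mul_div_right_comm, mul_div_cancel_right₀ _ h₂'.ne']
  rw [hmin, abs_mul, div_pow]
  field_simp

/-- The key scalar integral estimate: for `d ≥ 1` and `C > 1` there is a bound `B`
(depending only on `d` and `C`) such that for all `λ₁, λ₂ ≠ 0` and `u > 0`,
`∫_{Cu}^∞ (|λ₁λ₂| min(u/|λ₁|, v/|λ₂|)² / (uv))^{2d} dv/v ≤ B`. -/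
theorem stmt_3 (d : ℕ) (hd : 1 ≤ d) (C : ℝ) (hC : 1 < C) :
    ∃ B : ℝ, 0 < B ∧ ∀ (lam₁ lam₂ : ℝ), lam₁ ≠ 0 → lam₂ ≠ 0 → ∀ u : ℝ, 0 < u →
      (∫ v in Set.Ioi (C * u),
          (|lam₁ * lam₂| * (min (u / |lam₁|) (v / |lam₂|)) ^ 2 / (u * v)) ^ (2 * d) / v)
        ≤ B := by
  refine ⟨2, two_pos, fun lam₁ lam₂ h₁ h₂ u hu => ?_⟩
  have hCu : 0 ≤ C * u := by positivity
  have ht : 0 < u * |lam₂| / |lam₁| := by positivity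
  calc (∫ v in Ioi (C * u),
          (|lam₁ * lam₂| * (min (u / |lam₁|) (v / |lam₂|)) ^ 2 / (u * v)) ^ (2 * d) / v)
      = ∫ v in Ioi (C * u), (min (u * |lam₂| / |lam₁|) v ^ 2 /
          (u * |lam₂| / |lam₁| * v)) ^ (2 * d) / v := by
        refine setIntegral_congr_fun measurableSet_Ioi fun v hv => ?_
        rw [abs_mul_mul_min_sq_div_eq h₁ h₂ hu (hCu.trans_lt hv)]
    _ ≤ 2 := integral_Ioi_pow_min_sq_div_mul_div_le hd ht hCu
end

section
/- Let Ψ be Schwartz with Fourier transform supported in {1/2 ≤ |ξ| ≤ 2} and Φ Schwartz with Fourier transform supported in {|ξ| ≤ 1}. Let λ₁, λ₂ ≠ 0, 0 < ρ₁, ρ₂ ≤ 1, u, v > 0, k ∈ ℤ, and ψ Schwartz with annular Fourier support. If the function x ↦ ∫ Ψ_{2^k}(y) (Φ_{λ₁2^k} ∗ ψ_{u,q})(x − ρ₁λ₁y)(Φ_{λ₂2^k} ∗ ψ_{v,s})(x − ρ₂λ₂y) dy is not identically zero, then max(|λ₁|/u, |λ₂|/v) ≍ 2^{−k}, with implicit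 constants independent of ρ₁, ρ₂ ∈ (0,1]. -/
/-!
By Fourier inversion and Fubini, the form at `x` equals
`∫∫ Φ̂(λ₁2ᵏη₁) ψ̂_{u,q}(η₁) Φ̂(λ₂2ᵏη₂) ψ̂_{v,s}(η₂) e(⟪η₁ + η₂, x⟫) Ψ̂(2ᵏ(ρ₁λ₁η₁ + ρ₂λ₂η₂)) dη₁ dη₂`,
so it vanishes identically as soon as the symbol does. If `|λ₁|/u > 2⁻ᵏ/c₁`, then wherever
`ψ̂(uη₁) ≠ 0` we have `|λ₁2ᵏη₁| > 1`, so `Φ̂(λ₁2ᵏη₁) = 0`; likewise for `|λ₂|/v`. If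
`max(|λ₁|/u, |λ₂|/v) < 2⁻ᵏ/(4c₂)`, then wherever `ψ̂(uη₁) ψ̂(vη₂) ≠ 0` the frequency
`2ᵏ(ρ₁λ₁η₁ + ρ₂λ₂η₂)` has norm `< 1/2`, where `Ψ̂` vanishes.
-/

open MeasureTheory
open scoped FourierTransform ENNReal NNReal

/-- L¹-normalized dilation `Φ_t(x) = |t|^{-d} Φ(t⁻¹ x)`. -/
noncomputable def dil {d : ℕ} (Φ : EuclideanSpace ℝ (Fin d) → ℂ) (t : ℝ)
    (x : EuclideanSpace ℝ (Fin d)) : ℂ :=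
  ((|t| ^ d)⁻¹ : ℝ) • Φ (t⁻¹ • x)

/-- Dilation-translation `ψ_{u,q}(x) = u^{-d} ψ(u⁻¹(x − q))`. -/
noncomputable def dilTr {d : ℕ} (ψ : EuclideanSpace ℝ (Fin d) → ℂ) (u : ℝ)
    (q x : EuclideanSpace ℝ (Fin d)) : ℂ :=
  ((|u| ^ d)⁻¹ : ℝ) • ψ (u⁻¹ • (x - q))

open scoped RealInnerProductSpace Convolution SchwartzMap
open Set ContinuousLinearMap

section FourierRepresentation

variable {V E : Type*} [NormedAddCommGroup V] [InnerProductSpace ℝ V] [FiniteDimensional ℝ V]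
  [MeasurableSpace V] [BorelSpace V] [NormedAddCommGroup E] [NormedSpace ℂ E]

lemma Real.norm_fourier_le_integral_norm (f : V → E) (ξ : V) : ‖𝓕 f ξ‖ ≤ ∫ x, ‖f x‖ :=
  VectorFourier.norm_fourierIntegral_le_integral_norm _ _ _ _ _

lemma Real.norm_fourierInv_le_integral_norm (f : V → E) (x : V) : ‖𝓕⁻ f x‖ ≤ ∫ ξ, ‖f ξ‖ :=
  VectorFourier.norm_fourierIntegral_le_integral_norm _ _ _ _ _

lemma MeasureTheory.Integrable.continuous_fourier {f : V → E} (hf : Integrable f) :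
    Continuous (𝓕 f) :=
  VectorFourier.fourierIntegral_continuous Real.continuous_fourierChar continuous_inner hf

lemma MeasureTheory.Integrable.fourier_mul {f g : V → ℂ} (hf : Integrable f) (hg : Integrable g) :
    Integrable (fun ξ ↦ 𝓕 f ξ * g ξ) :=
  hg.bdd_mul hf.continuous_fourier.aestronglyMeasurable
    (ae_of_all _ fun ξ ↦ Real.norm_fourier_le_integral_norm f ξ)

lemma convolution_eq_fourierInv_mul {φ g : V → ℂ} (hφ : Integrable φ) (hg : Integrable g)
    (hgc : Continuous g) (hFg : Integrable (𝓕 g)) :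
    φ ⋆[mul ℂ ℂ] g = 𝓕⁻ (fun ξ ↦ 𝓕 φ ξ * 𝓕 g ξ) := by
  have hg_inv : 𝓕⁻ (𝓕 g) = g := hgc.fourierInv_fourier_eq hg hFg
  have hg_bdd : BddAbove (range fun x ↦ ‖g x‖) :=
    ⟨_, forall_mem_range.2 fun x ↦ hg_inv ▸ Real.norm_fourierInv_le_integral_norm (𝓕 g) x⟩
  have hF : 𝓕 (φ ⋆[mul ℂ ℂ] g) = fun ξ ↦ 𝓕 φ ξ * 𝓕 g ξ :=
    funext (Real.fourier_mul_convolution_eq hφ hg)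
  have hconv : Continuous (φ ⋆[mul ℂ ℂ] g) :=
    hg_bdd.continuous_convolution_right_of_integrable (mul ℂ ℂ) hφ hgc
  rw [← hF, hconv.fourierInv_fourier_eq (hφ.integrable_convolution _ hg)
    (hF ▸ hφ.fourier_mul hFg)]

lemma integral_mul_fourierInv_mul_fourierInv {Ψ P₁ P₂ : V → ℂ} (hΨ : Integrable Ψ)
    (hP₁ : Integrable P₁) (hP₂ : Integrable P₂) (a₁ a₂ : ℝ) (x : V) :
    ∫ y, Ψ y * 𝓕⁻ P₁ (x - a₁ • y) * 𝓕⁻ P₂ (x - a₂ • y) =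
      ∫ η : V × V, P₁ η.1 * P₂ η.2 * 𝐞 ⟪η.1 + η.2, x⟫ * 𝓕 Ψ (a₁ • η.1 + a₂ • η.2) := by
  set F : V → V × V → ℂ := fun y η ↦
    𝐞 (⟪η.1, x - a₁ • y⟫ + ⟪η.2, x - a₂ • y⟫) * (Ψ y * (P₁ η.1 * P₂ η.2))
  have hF : Integrable (Function.uncurry F) (volume.prod (volume.prod volume)) := by
    refine (hΨ.mul_prod (hP₁.mul_prod hP₂)).bdd_mul (c := 1) ?_ (ae_of_all _ fun _ ↦ ?_)
    · exact (continuous_subtype_val.comp (Real.continuous_fourierChar.comp (by fun_prop)))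
        |>.aestronglyMeasurable
    · exact (Circle.norm_coe _).le
  have h_inner : ∀ y, Ψ y * 𝓕⁻ P₁ (x - a₁ • y) * 𝓕⁻ P₂ (x - a₂ • y) = ∫ η, F y η := by
    intro y
    rw [Real.fourierInv_eq, Real.fourierInv_eq, mul_assoc, ← integral_prod_mul,
      ← integral_const_mul]
    congr 1 with η
    simp only [F, Circle.smul_def, smul_eq_mul, AddChar.map_add_eq_mul, Circle.coe_mul]
    ring
  have h_outer : ∀ η : V × V, ∫ y, F y η =
      P₁ η.1 * P₂ η.2 * 𝐞 ⟪η.1 + η.2, x⟫ * 𝓕 Ψ (a₁ • η.1 + a₂ • η.2) := by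
    intro η
    rw [Real.fourier_eq, ← integral_const_mul]
    congr 1 with y
    have h_phase : ⟪η.1, x - a₁ • y⟫ + ⟪η.2, x - a₂ • y⟫ =
        ⟪η.1 + η.2, x⟫ + -⟪y, a₁ • η.1 + a₂ • η.2⟫ := by
      simp only [inner_add_left, inner_add_right, inner_sub_right,
        real_inner_smul_right, real_inner_comm y]
      ring
    simp only [F]
    rw [h_phase]
    simp only [Circle.smul_def, smul_eq_mul, AddChar.map_add_eq_mul, Circle.coe_mul]
    ring
  simp_rw [h_inner, ← h_outer]
  exact integral_integral_swap hF

lemma integral_mul_fourierInv_mul_fourierInv_eq_zero {Ψ P₁ P₂ : V → ℂ} (hΨ : Integrable Ψ)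
    (hP₁ : Integrable P₁) (hP₂ : Integrable P₂) {a₁ a₂ : ℝ}
    (h : ∀ η₁ η₂, P₁ η₁ * P₂ η₂ * 𝓕 Ψ (a₁ • η₁ + a₂ • η₂) = 0) (x : V) :
    ∫ y, Ψ y * 𝓕⁻ P₁ (x - a₁ • y) * 𝓕⁻ P₂ (x - a₂ • y) = 0 := by
  rw [integral_mul_fourierInv_mul_fourierInv hΨ hP₁ hP₂]
  refine integral_eq_zero_of_ae (ae_of_all _ fun η ↦ ?_)
  simp only [Pi.zero_apply]
  rw [mul_right_comm, h, zero_mul]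

end FourierRepresentation

section Dilation

variable {d : ℕ}

local notation "V" => EuclideanSpace ℝ (Fin d)

lemma integrable_dil {f : V → ℂ} (hf : Integrable f) {t : ℝ} (ht : t ≠ 0) :
    Integrable (dil f t) :=
  (hf.comp_smul (inv_ne_zero ht)).smul ((|t| ^ d)⁻¹ : ℝ)

lemma integrable_dilTr {f : V → ℂ} (hf : Integrable f) {u : ℝ} (hu : u ≠ 0) (q : V) :
    Integrable (dilTr f u q) :=
  (integrable_dil hf hu).comp_sub_right q

lemma fourier_dil (f : V → ℂ) {t : ℝ} (ht : t ≠ 0) (ξ : V) :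
    𝓕 (dil f t) ξ = 𝓕 f (t • ξ) := by
  have h := Measure.integral_comp_inv_smul (volume : Measure V)
    (fun y ↦ 𝐞 (-⟪t • y, ξ⟫) • ((|t| ^ d)⁻¹ : ℝ) • f y) t
  simp only [smul_inv_smul₀ ht, finrank_euclideanSpace_fin] at h
  simp only [Real.fourier_eq, dil]
  rw [h]
  simp only [smul_comm (𝐞 _) ((|t| ^ d)⁻¹ : ℝ), integral_smul, smul_smul, abs_pow,
    mul_inv_cancel₀ (pow_ne_zero d (abs_ne_zero.2 ht)), one_smul, real_inner_smul_left,
    real_inner_smul_right]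

lemma fourier_dilTr (f : V → ℂ) {u : ℝ} (hu : u ≠ 0) (q ξ : V) :
    𝓕 (dilTr f u q) ξ = 𝐞 (-⟪q, ξ⟫) • 𝓕 f (u • ξ) := by
  have h := congr_fun
    (VectorFourier.fourierIntegral_comp_add_right 𝐞 volume (innerₗ V) (dil f u) (-q)) ξ
  rw [← fourier_dil f hu, ← inner_neg_left]
  exact h

lemma continuous_dilTr (ψ : 𝓢(V, ℂ)) (u : ℝ) (q : V) : Continuous (dilTr ψ u q) := by
  unfold dilTr
  fun_prop

lemma integrable_fourier_dilTr (ψ : 𝓢(V, ℂ)) {u : ℝ} (hu : u ≠ 0) (q : V) :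
    Integrable (𝓕 (dilTr ψ u q)) :=
  ((𝓕 ψ).integrable.comp_smul hu).norm.mono'
    (integrable_dilTr ψ.integrable hu q).continuous_fourier.aestronglyMeasurable
    (ae_of_all _ fun ξ ↦ by rw [fourier_dilTr _ hu, Circle.norm_smul]; rfl)

lemma integral_dil_mul_dilTr_sub_eq_fourierInv (Φ ψ : 𝓢(V, ℂ)) {t u : ℝ} (ht : t ≠ 0)
    (hu : u ≠ 0) (q z : V) :
    ∫ w, dil Φ t w * dilTr ψ u q (z - w) =
      𝓕⁻ (fun ξ ↦ 𝓕 (dil Φ t) ξ * 𝓕 (dilTr ψ u q) ξ) z := by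
  rw [← convolution_eq_fourierInv_mul (integrable_dil Φ.integrable ht)
    (integrable_dilTr ψ.integrable hu q) (continuous_dilTr ψ u q)
    (integrable_fourier_dilTr ψ hu q)]
  rfl

theorem integral_dil_mul_convolutions_eq_zero (Ψ Φ ψ : 𝓢(V, ℂ)) {T t₁ t₂ u v a₁ a₂ : ℝ}
    (hT : T ≠ 0) (ht₁ : t₁ ≠ 0) (ht₂ : t₂ ≠ 0) (hu : u ≠ 0) (hv : v ≠ 0) (q s : V)
    (h : ∀ η₁ η₂ : V, 𝓕 (Φ : V → ℂ) (t₁ • η₁) * 𝓕 (ψ : V → ℂ) (u • η₁) *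
      (𝓕 (Φ : V → ℂ) (t₂ • η₂) * 𝓕 (ψ : V → ℂ) (v • η₂)) *
      𝓕 (Ψ : V → ℂ) (T • (a₁ • η₁ + a₂ • η₂)) = 0) (x : V) :
    ∫ y, dil Ψ T y * (∫ w, dil Φ t₁ w * dilTr ψ u q (x - a₁ • y - w)) *
      (∫ w, dil Φ t₂ w * dilTr ψ v s (x - a₂ • y - w)) = 0 := by
  simp only [integral_dil_mul_dilTr_sub_eq_fourierInv Φ ψ ht₁ hu,
    integral_dil_mul_dilTr_sub_eq_fourierInv Φ ψ ht₂ hv]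
  refine integral_mul_fourierInv_mul_fourierInv_eq_zero (integrable_dil Ψ.integrable hT)
    ((integrable_dil Φ.integrable ht₁).fourier_mul (integrable_fourier_dilTr ψ hu q))
    ((integrable_dil Φ.integrable ht₂).fourier_mul (integrable_fourier_dilTr ψ hv s))
    (fun η₁ η₂ ↦ ?_) x
  rw [fourier_dil _ ht₁, fourier_dil _ ht₂, fourier_dilTr _ hu, fourier_dilTr _ hv,
    fourier_dil _ hT, Circle.smul_def, Circle.smul_def, smul_eq_mul, smul_eq_mul]
  linear_combination (𝐞 (-⟪q, η₁⟫) * 𝐞 (-⟪s, η₂⟫) : ℂ) * h η₁ η₂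

end Dilation

lemma abs_mul_le_mul_of_div_le {ρ l w M : ℝ} (hρ : |ρ| ≤ 1) (hw : 0 < w)
    (h : |l| / w ≤ M) : |ρ * l| ≤ M * w := by
  rw [div_le_iff₀ hw] at h
  rw [abs_mul]
  nlinarith [abs_nonneg l]

lemma mul_lt_mul_abs_of_div_mul_inv_lt {R c T l w : ℝ} (hc : 0 < c) (hT : 0 < T) (hw : 0 < w)
    (h : R / c * T⁻¹ < |l| / w) : R * w < c * |l * T| := by
  rw [abs_mul, abs_of_pos hT]
  field_simp at h
  linarith

section FrequencySupport

variable {W : Type*} [SeminormedAddCommGroup W] [NormedSpace ℝ W]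

lemma apply_smul_mul_apply_smul_eq_zero {f g : W → ℂ} {R c t u : ℝ}
    (hf : ∀ ξ, R < ‖ξ‖ → f ξ = 0) (hg : ∀ ξ, ‖ξ‖ < c → g ξ = 0) (hu : 0 < u)
    (h : R * u < c * |t|) (η : W) : f (t • η) * g (u • η) = 0 := by
  by_cases hη : ‖u • η‖ < c
  · rw [hg _ hη, mul_zero]
  · rw [norm_smul, Real.norm_eq_abs, abs_of_pos hu, not_lt] at hη
    rw [hf _ ?_, zero_mul]
    rw [norm_smul, Real.norm_eq_abs]
    nlinarith [mul_le_mul_of_nonneg_left hη (abs_nonneg t)]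

lemma norm_smul_add_smul_le {a₁ a₂ u v c M : ℝ} {η₁ η₂ : W} (hu : 0 < u) (hv : 0 < v)
    (h₁ : ‖u • η₁‖ ≤ c) (h₂ : ‖v • η₂‖ ≤ c) (ha₁ : |a₁| ≤ M * u) (ha₂ : |a₂| ≤ M * v) :
    ‖a₁ • η₁ + a₂ • η₂‖ ≤ 2 * c * M := by
  have hM : 0 ≤ M := nonneg_of_mul_nonneg_left ((abs_nonneg a₁).trans ha₁) hu
  rw [norm_smul, Real.norm_eq_abs, abs_of_pos hu] at h₁
  rw [norm_smul, Real.norm_eq_abs, abs_of_pos hv] at h₂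
  calc ‖a₁ • η₁ + a₂ • η₂‖ ≤ |a₁| * ‖η₁‖ + |a₂| * ‖η₂‖ := by
        simpa only [norm_smul, Real.norm_eq_abs] using norm_add_le (a₁ • η₁) (a₂ • η₂)
    _ ≤ M * u * ‖η₁‖ + M * v * ‖η₂‖ := by gcongr
    _ ≤ 2 * c * M := by
        nlinarith [mul_le_mul_of_nonneg_left h₁ hM, mul_le_mul_of_nonneg_left h₂ hM]

lemma apply_smul_mul_apply_smul_mul_apply_smul_eq_zero {g F : W → ℂ} {c r T u v a₁ a₂ M : ℝ}
    (hg : ∀ ξ, c < ‖ξ‖ → g ξ = 0) (hF : ∀ ξ, ‖ξ‖ < r → F ξ = 0) (hu : 0 < u) (hv : 0 < v)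
    (hT : 0 < T) (ha₁ : |a₁| ≤ M * u) (ha₂ : |a₂| ≤ M * v) (h : 2 * c * M * T < r)
    (η₁ η₂ : W) : g (u • η₁) * g (v • η₂) * F (T • (a₁ • η₁ + a₂ • η₂)) = 0 := by
  by_cases h₁ : c < ‖u • η₁‖
  · rw [hg _ h₁, zero_mul, zero_mul]
  by_cases h₂ : c < ‖v • η₂‖
  · rw [hg _ h₂, mul_zero, zero_mul]
  rw [hF _ ?_, mul_zero]
  rw [norm_smul, Real.norm_eq_abs, abs_of_pos hT]
  nlinarith [norm_smul_add_smul_le hu hv (not_lt.1 h₁) (not_lt.1 h₂) ha₁ ha₂]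

end FrequencySupport

theorem stmt_14_general (d : ℕ)
    (Ψ Φ ψ : SchwartzMap (EuclideanSpace ℝ (Fin d)) ℂ)
    (hΨ : ∀ ξ : EuclideanSpace ℝ (Fin d), ‖ξ‖ < 1 / 2 ∨ 2 < ‖ξ‖ → 𝓕 (fun x => Ψ x) ξ = 0)
    (hΦ : ∀ ξ : EuclideanSpace ℝ (Fin d), 1 < ‖ξ‖ → 𝓕 (fun x => Φ x) ξ = 0)
    (c₁ c₂ : ℝ) (hc₁ : 0 < c₁) (hc₁₂ : c₁ < c₂)
    (hψ : ∀ ξ : EuclideanSpace ℝ (Fin d), ‖ξ‖ < c₁ ∨ c₂ < ‖ξ‖ → 𝓕 (fun x => ψ x) ξ = 0) :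
    ∃ C₁ C₂ : ℝ, 0 < C₁ ∧ 0 < C₂ ∧
      ∀ (lam₁ lam₂ : ℝ), lam₁ ≠ 0 → lam₂ ≠ 0 →
      ∀ (ρ₁ ρ₂ : ℝ), 0 < ρ₁ → ρ₁ ≤ 1 → 0 < ρ₂ → ρ₂ ≤ 1 →
      ∀ (u v : ℝ), 0 < u → 0 < v → ∀ (k : ℤ) (q s : EuclideanSpace ℝ (Fin d)),
        ¬ (∀ x : EuclideanSpace ℝ (Fin d),
            (∫ y, dil (fun w => Ψ w) ((2 : ℝ) ^ k) y *
              (∫ w, dil (fun z => Φ z) (lam₁ * 2 ^ k) w *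
                dilTr (fun z => ψ z) u q (x - ρ₁ • (lam₁ • y) - w)) *
              (∫ w, dil (fun z => Φ z) (lam₂ * 2 ^ k) w *
                dilTr (fun z => ψ z) v s (x - ρ₂ • (lam₂ • y) - w))) = 0) →
        C₁ * (2 : ℝ) ^ (-k) ≤ max (|lam₁| / u) (|lam₂| / v) ∧
          max (|lam₁| / u) (|lam₂| / v) ≤ C₂ * (2 : ℝ) ^ (-k) := by
  have hc₂ : 0 < c₂ := hc₁.trans hc₁₂
  refine ⟨1 / (4 * c₂), 1 / c₁, by positivity, by positivity, ?_⟩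
  intro lam₁ lam₂ hl₁ hl₂ ρ₁ ρ₂ hρ₁ hρ₁1 hρ₂ hρ₂1 u v hu hv k q s hne
  have hT : (0 : ℝ) < 2 ^ k := by positivity
  rw [zpow_neg]
  by_contra hcon
  apply hne
  simp only [smul_smul]
  refine integral_dil_mul_convolutions_eq_zero Ψ Φ ψ hT.ne' (mul_ne_zero hl₁ hT.ne')
    (mul_ne_zero hl₂ hT.ne') hu.ne' hv.ne' q s (fun η₁ η₂ ↦ ?_)
  rcases not_and_or.mp hcon with hlow | hhigh
  · have hM : 2 * c₂ * max (|lam₁| / u) (|lam₂| / v) * 2 ^ k < 1 / 2 := by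
      rw [not_le] at hlow
      field_simp at hlow ⊢
      linarith
    have h := apply_smul_mul_apply_smul_mul_apply_smul_eq_zero (fun ξ h ↦ hψ ξ (Or.inr h))
      (fun ξ h ↦ hΨ ξ (Or.inl h)) hu hv hT
      (abs_mul_le_mul_of_div_le ((abs_of_pos hρ₁).le.trans hρ₁1) hu (le_max_left _ _))
      (abs_mul_le_mul_of_div_le ((abs_of_pos hρ₂).le.trans hρ₂1) hv (le_max_right _ _)) hM η₁ η₂
    linear_combination (𝓕 (fun x => Φ x) ((lam₁ * 2 ^ k) • η₁) *
      𝓕 (fun x => Φ x) ((lam₂ * 2 ^ k) • η₂)) * h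
  · rcases lt_max_iff.1 (not_le.1 hhigh) with h | h
    · rw [apply_smul_mul_apply_smul_eq_zero hΦ (fun ξ h ↦ hψ ξ (Or.inl h)) hu
        (mul_lt_mul_abs_of_div_mul_inv_lt hc₁ hT hu h), zero_mul, zero_mul]
    · rw [apply_smul_mul_apply_smul_eq_zero hΦ (fun ξ h ↦ hψ ξ (Or.inl h)) hv
        (mul_lt_mul_abs_of_div_mul_inv_lt hc₁ hT hv h), mul_zero, zero_mul]

/-- Frequency-localization constraint: if the bilinear building block does not vanish
identically, then `max(|λ₁|/u, |λ₂|/v) ≍ 2^{−k}` with constants independent of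
`ρ₁, ρ₂ ∈ (0,1]`. -/
theorem stmt_14 (d : ℕ) (hd : 0 < d)
    (Ψ Φ ψ : SchwartzMap (EuclideanSpace ℝ (Fin d)) ℂ)
    (hΨ : ∀ ξ : EuclideanSpace ℝ (Fin d), ‖ξ‖ < 1 / 2 ∨ 2 < ‖ξ‖ → 𝓕 (fun x => Ψ x) ξ = 0)
    (hΦ : ∀ ξ : EuclideanSpace ℝ (Fin d), 1 < ‖ξ‖ → 𝓕 (fun x => Φ x) ξ = 0)
    (c₁ c₂ : ℝ) (hc₁ : 0 < c₁) (hc₁₂ : c₁ < c₂)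
    (hψ : ∀ ξ : EuclideanSpace ℝ (Fin d), ‖ξ‖ < c₁ ∨ c₂ < ‖ξ‖ → 𝓕 (fun x => ψ x) ξ = 0) :
    ∃ C₁ C₂ : ℝ, 0 < C₁ ∧ 0 < C₂ ∧
      ∀ (lam₁ lam₂ : ℝ), lam₁ ≠ 0 → lam₂ ≠ 0 →
      ∀ (ρ₁ ρ₂ : ℝ), 0 < ρ₁ → ρ₁ ≤ 1 → 0 < ρ₂ → ρ₂ ≤ 1 →
      ∀ (u v : ℝ), 0 < u → 0 < v → ∀ (k : ℤ) (q s : EuclideanSpace ℝ (Fin d)),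
        ¬ (∀ x : EuclideanSpace ℝ (Fin d),
            (∫ y, dil (fun w => Ψ w) ((2 : ℝ) ^ k) y *
              (∫ w, dil (fun z => Φ z) (lam₁ * 2 ^ k) w *
                dilTr (fun z => ψ z) u q (x - ρ₁ • (lam₁ • y) - w)) *
              (∫ w, dil (fun z => Φ z) (lam₂ * 2 ^ k) w *
                dilTr (fun z => ψ z) v s (x - ρ₂ • (lam₂ • y) - w))) = 0) →
        C₁ * (2 : ℝ) ^ (-k) ≤ max (|lam₁| / u) (|lam₂| / v) ∧
          max (|lam₁| / u) (|lam₂| / v) ≤ C₂ * (2 : ℝ) ^ (-k) :=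
  stmt_14_general d Ψ Φ ψ hΨ hΦ c₁ c₂ hc₁ hc₁₂ hψ
end
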